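/- Let (Y_n) be a sequence of independent real random variables with Var(Y_n) uniformly bounded and (1/N)∑_{n=1}^N E[Y_n] → 0. Then (1/N)∑_{n=1}^N Y_n → 0 almost surely. -/

import Mathlib

/-!
Center and weight the variables: `Zₙ = (Yₙ - E Yₙ)/(n + 1)` are independent, centered, with
`Var Zₙ ≤ M/(n + 1)²` summable. Their partial sums form a martingale bounded in `L²`, hence in `L¹`,
so they converge almost surely by the martingale convergence theorem. Kronecker's lemma turns
convergence of `∑ (Yₙ - E Yₙ)/(n + 1)` into `(1/N) ∑_{n<N} (Yₙ - E Yₙ) → 0`, and the hypothesis on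
the means finishes the proof.
-/

open MeasureTheory ProbabilityTheory Filter Finset Topology

theorem sum_range_natCast_add_one_smul_sub {E : Type*} [AddCommGroup E] [Module ℝ E]
    (S : ℕ → E) (N : ℕ) :
    ∑ n ∈ range N, ((n : ℝ) + 1) • (S (n + 1) - S n) = (N : ℝ) • S N - ∑ n ∈ range N, S n := by
  induction N with
  | zero => simp
  | succ N ih =>
    rw [sum_range_succ, ih, sum_range_succ]
    push_cast
    simp only [smul_sub, add_smul, one_smul]
    abel

/-- Kronecker's lemma. -/
theorem tendsto_inv_smul_sum_of_tendsto_sum_inv_smul {E : Type*} [NormedAddCommGroup E]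
    [NormedSpace ℝ E] {a : ℕ → E} {L : E}
    (h : Tendsto (fun N ↦ ∑ n ∈ range N, ((n : ℝ) + 1)⁻¹ • a n) atTop (𝓝 L)) :
    Tendsto (fun N : ℕ ↦ (N : ℝ)⁻¹ • ∑ n ∈ range N, a n) atTop (𝓝 0) := by
  set S := fun N ↦ ∑ n ∈ range N, ((n : ℝ) + 1)⁻¹ • a n
  have hS : ∀ n, a n = ((n : ℝ) + 1) • (S (n + 1) - S n) := fun n ↦ by
    simp only [S, sum_range_succ, add_sub_cancel_left, smul_smul]
    rw [mul_inv_cancel₀ (by positivity), one_smul]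
  have hdiff : Tendsto (fun N : ℕ ↦ S N - (N : ℝ)⁻¹ • ∑ n ∈ range N, S n) atTop (𝓝 (L - L)) :=
    h.sub h.cesaro_smul
  rw [sub_self] at hdiff
  refine hdiff.congr' ?_
  filter_upwards [eventually_ne_atTop 0] with N hN
  simp_rw [hS, sum_range_natCast_add_one_smul_sub, smul_sub, smul_smul,
    inv_mul_cancel₀ (Nat.cast_ne_zero.2 hN : (N : ℝ) ≠ 0), one_smul]

namespace ProbabilityTheory

variable {Ω : Type*} [MeasurableSpace Ω] {μ : Measure Ω}

lemma eLpNorm_two_eq_ofReal_sqrt_variance {X : Ω → ℝ} (hX : MemLp X 2 μ) (h0 : μ[X] = 0) :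
    eLpNorm X 2 μ = ENNReal.ofReal √Var[X; μ] := by
  rw [hX.eLpNorm_eq_integral_rpow_norm two_ne_zero ENNReal.ofNat_ne_top,
    variance_of_integral_eq_zero hX.aemeasurable h0, Real.sqrt_eq_rpow]
  simp

variable {X : ℕ → Ω → ℝ}

lemma iIndepFun.variance_sum_range_le_tsum (hindep : iIndepFun X μ) (hL2 : ∀ n, MemLp (X n) 2 μ)
    (hvar : Summable fun n ↦ Var[X n; μ]) (N : ℕ) :
    Var[∑ n ∈ range N, X n; μ] ≤ ∑' n, Var[X n; μ] := by
  rw [IndepFun.variance_sum (fun n _ ↦ hL2 n) fun i _ j _ hij ↦ hindep.indepFun hij]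
  exact hvar.sum_le_tsum _ fun n _ ↦ variance_nonneg _ _

variable [IsProbabilityMeasure μ]

lemma iIndepFun.martingale_sum_range_succ (hindep : iIndepFun X μ)
    (hX : ∀ n, StronglyMeasurable (X n)) (hint : ∀ n, Integrable (X n) μ) (hmean : ∀ n, μ[X n] = 0) :
    Martingale (fun k ↦ ∑ n ∈ range (k + 1), X n) (Filtration.natural X hX) μ := by
  set ℱ := Filtration.natural X hX
  have hadapted : StronglyAdapted ℱ fun k ↦ ∑ n ∈ range (k + 1), X n := fun k ↦
    Finset.stronglyMeasurable_sum _ fun n hn ↦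
      (Filtration.stronglyAdapted_natural hX n).mono (ℱ.mono (by simpa [Nat.lt_succ_iff] using hn))
  refine martingale_nat hadapted (fun k ↦ integrable_finsetSum' _ fun n _ ↦ hint n) fun k ↦ ?_
  have hnext : μ[X (k + 1) | ℱ k] =ᵐ[μ] 0 := by
    have h := hindep.condExp_natural_ae_eq_of_lt hX (Nat.lt_succ_self k)
    rwa [hmean] at h
  rw [sum_range_succ (n := k + 1)]
  filter_upwards [condExp_add (m := ℱ k) (integrable_finsetSum' _ fun n _ ↦ hint n) (hint (k + 1)),
    hnext] with ω hsum hzero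
  rw [hsum, Pi.add_apply, hzero, condExp_of_stronglyMeasurable (ℱ.le k) (hadapted k)
    (integrable_finsetSum' _ fun n _ ↦ hint n)]
  simp

lemma iIndepFun.ae_exists_tendsto_sum_range_of_stronglyMeasurable (hindep : iIndepFun X μ)
    (hX : ∀ n, StronglyMeasurable (X n)) (hL2 : ∀ n, MemLp (X n) 2 μ) (hmean : ∀ n, μ[X n] = 0)
    (hvar : Summable fun n ↦ Var[X n; μ]) :
    ∀ᵐ ω ∂μ, ∃ l, Tendsto (fun N ↦ ∑ n ∈ range N, X n ω) atTop (𝓝 l) := by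
  have hmart := hindep.martingale_sum_range_succ hX
    (fun n ↦ (hL2 n).integrable one_le_two) hmean
  have hbdd : ∀ k, eLpNorm (∑ n ∈ range (k + 1), X n) 1 μ ≤ (√(∑' n, Var[X n; μ])).toNNReal := by
    intro k
    have hsum : MemLp (∑ n ∈ range (k + 1), X n) 2 μ := memLp_finsetSum' _ fun n _ ↦ hL2 n
    have hsum_mean : μ[∑ n ∈ range (k + 1), X n] = 0 := by
      simp only [Finset.sum_apply]
      rw [integral_finsetSum _ fun n _ ↦ (hL2 n).integrable one_le_two]
      simp [hmean]
    calc eLpNorm (∑ n ∈ range (k + 1), X n) 1 μ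
        ≤ eLpNorm (∑ n ∈ range (k + 1), X n) 2 μ :=
          eLpNorm_le_eLpNorm_of_exponent_le one_le_two hsum.1
      _ = ENNReal.ofReal √Var[∑ n ∈ range (k + 1), X n; μ] :=
          eLpNorm_two_eq_ofReal_sqrt_variance hsum hsum_mean
      _ ≤ ENNReal.ofReal √(∑' n, Var[X n; μ]) := by
          gcongr
          exact hindep.variance_sum_range_le_tsum hL2 hvar _
  filter_upwards [hmart.submartingale.exists_ae_tendsto_of_bdd hbdd] with ω ⟨l, hl⟩
  exact ⟨l, (tendsto_add_atTop_iff_nat 1).1 (by simpa using hl)⟩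

theorem iIndepFun.ae_exists_tendsto_sum_range (hindep : iIndepFun X μ)
    (hL2 : ∀ n, MemLp (X n) 2 μ) (hmean : ∀ n, μ[X n] = 0)
    (hvar : Summable fun n ↦ Var[X n; μ]) :
    ∀ᵐ ω ∂μ, ∃ l, Tendsto (fun N ↦ ∑ n ∈ range N, X n ω) atTop (𝓝 l) := by
  have hae : ∀ n, X n =ᵐ[μ] (hL2 n).1.mk := fun n ↦ (hL2 n).1.ae_eq_mk
  have hmk := (hindep.congr hae).ae_exists_tendsto_sum_range_of_stronglyMeasurable
    (fun n ↦ (hL2 n).1.stronglyMeasurable_mk)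
    (fun n ↦ (hL2 n).ae_eq (hae n)) (fun n ↦ (integral_congr_ae (hae n)).symm.trans (hmean n))
    (by simpa only [variance_congr (hae _)] using hvar)
  filter_upwards [hmk, ae_all_iff.2 hae] with ω ⟨l, hl⟩ hω
  exact ⟨l, by simpa only [hω] using hl⟩

end ProbabilityTheory

/-- Kolmogorov strong law for independent random variables with uniformly
bounded variances and Cesàro-vanishing means. -/
theorem stmt_13 {Ω : Type*} [MeasureSpace Ω] [IsProbabilityMeasure (volume : Measure Ω)]
    (Y : ℕ → Ω → ℝ)
    (hindep : iIndepFun Y volume)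
    (hL2 : ∀ n, MemLp (Y n) 2 volume)
    (M : ℝ) (hvar : ∀ n, variance (Y n) volume ≤ M)
    (hmean : Tendsto (fun N : ℕ => (1 / (N : ℝ)) * ∑ n ∈ Finset.range N, ∫ ω, Y n ω)
      atTop (nhds 0)) :
    ∀ᵐ ω, Tendsto (fun N : ℕ => (1 / (N : ℝ)) * ∑ n ∈ Finset.range N, Y n ω)
      atTop (nhds 0) := by
  set c : ℕ → ℝ := fun n ↦ ∫ ω, Y n ω
  set w : ℕ → ℝ := fun n ↦ ((n : ℝ) + 1)⁻¹
  have hw : Summable fun n ↦ w n ^ 2 := by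
    simpa [w] using (summable_nat_add_iff 1).2 (Real.summable_nat_pow_inv.2 one_lt_two)
  have hseries : ∀ᵐ ω, ∃ l, Tendsto (fun N ↦ ∑ n ∈ range N, w n * (Y n ω - c n)) atTop (𝓝 l) := by
    refine iIndepFun.ae_exists_tendsto_sum_range (X := fun n ω ↦ w n * (Y n ω - c n))
      (hindep.comp (fun n x ↦ w n * (x - c n)) fun n ↦ by fun_prop)
      (fun n ↦ ((hL2 n).sub (memLp_const _)).const_mul _) (fun n ↦ ?_) ?_
    · rw [integral_const_mul, integral_sub ((hL2 n).integrable one_le_two) (integrable_const _)]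
      simp [c]
    · refine (hw.mul_right M).of_nonneg_of_le (fun n ↦ variance_nonneg _ _) fun n ↦ ?_
      rw [variance_const_mul, variance_sub_const (hL2 n).1]
      exact mul_le_mul_of_nonneg_left (hvar n) (sq_nonneg _)
  filter_upwards [hseries] with ω ⟨l, hl⟩
  have hcentered := tendsto_inv_smul_sum_of_tendsto_sum_inv_smul (a := fun n ↦ Y n ω - c n) hl
  rw [← add_zero (0 : ℝ)]
  refine (hcentered.add hmean).congr fun N ↦ ?_
  simp [← mul_add]
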